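/- arXiv:2405.02430 — 2 statements merged into one kernel-verified Lean document; each statement's English description precedes it below -/
import Mathlib

section
/- Abramov's reduction formula: Let L be a field, φ an automorphism of L, a, u ∈ L with u ≠ 0, and m ∈ ℤ. Then a/φ^m(u) = φ(g) − g + φ^{−m}(a)/u, where g = Σ_{i=0}^{m−1} φ^{i−m}(a)/φ^i(u) if m ≥ 0, and g = −Σ_{i=m}^{−1} φ^{i−m}(a)/φ^i(u) if m < 0. -/
/-- **Abramov's reduction formula.** Let L be a field, φ an automorphism of L,
a, u ∈ L with u ≠ 0, and m ∈ ℤ. Then a/φ^m(u) = φ(g) − g + φ^{−m}(a)/u, where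
g = Σ_{i=0}^{m−1} φ^{i−m}(a)/φ^i(u) if m ≥ 0, and
g = −Σ_{i=m}^{−1} φ^{i−m}(a)/φ^i(u) if m < 0 (the latter sum reindexed as
i = m + i' with i' = 0,…,−m−1). -/
theorem abramov_reduction_formula
    (L : Type*) [Field L] (φ : RingAut L) (a u : L) (hu : u ≠ 0) (m : ℤ) :
    a / (φ ^ m) u =
      φ (if 0 ≤ m then
            ∑ i ∈ Finset.range m.toNat, (φ ^ ((i : ℤ) - m)) a / (φ ^ (i : ℤ)) u
          else
            -∑ i ∈ Finset.range (-m).toNat, (φ ^ (i : ℤ)) a / (φ ^ (m + (i : ℤ))) u) -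
        (if 0 ≤ m then
            ∑ i ∈ Finset.range m.toNat, (φ ^ ((i : ℤ) - m)) a / (φ ^ (i : ℤ)) u
          else
            -∑ i ∈ Finset.range (-m).toNat, (φ ^ (i : ℤ)) a / (φ ^ (m + (i : ℤ))) u) +
        (φ ^ (-m)) a / u := by
  have hφ : ∀ (k : ℤ) (x : L), φ ((φ ^ k) x) = (φ ^ (k + 1)) x := by
    intro k x
    rw [add_comm, zpow_add, zpow_one]
    rfl
  split_ifs with h
  · obtain ⟨n, rfl⟩ := Int.eq_ofNat_of_zero_le h
    set f : ℕ → L := fun i => (φ ^ ((i : ℤ) - (n : ℤ))) a / (φ ^ (i : ℤ)) u with hf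
    rw [Int.toNat_natCast, map_sum]
    have hshift : ∀ i ∈ Finset.range n,
        φ ((φ ^ ((i : ℤ) - (n : ℤ))) a / (φ ^ (i : ℤ)) u) = f (i + 1) := by
      intro i _
      rw [map_div₀, hφ, hφ, hf]
      push_cast
      ring_nf
    rw [Finset.sum_congr rfl hshift, ← Finset.sum_sub_distrib,
      Finset.sum_range_sub f n]
    have h0 : f 0 = (φ ^ (-(n : ℤ))) a / u := by
      simp [hf]
    have hn : f n = a / (φ ^ (n : ℤ)) u := by
      simp [hf]
    rw [h0, hn]
    ring
  · set f : ℕ → L := fun i => (φ ^ (i : ℤ)) a / (φ ^ (m + (i : ℤ))) u with hf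
    rw [map_neg, map_sum]
    have hshift : ∀ i ∈ Finset.range (-m).toNat,
        φ ((φ ^ (i : ℤ)) a / (φ ^ (m + (i : ℤ))) u) = f (i + 1) := by
      intro i _
      rw [map_div₀, hφ, hφ, hf]
      push_cast
      ring_nf
    rw [Finset.sum_congr rfl hshift, neg_sub_neg, ← Finset.sum_sub_distrib,
      Finset.sum_range_sub' f]
    have h0 : f 0 = a / (φ ^ m) u := by
      simp [hf]
    have hn : f (-m).toNat = (φ ^ (-m)) a / u := by
      have h1 : ((-m).toNat : ℤ) = -m := Int.toNat_of_nonneg (by omega)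
      simp only [hf, h1, add_neg_cancel, zpow_zero]
      rfl
    rw [h0, hn]
    ring
end

section
/- Every cyclic WZ-pair is a uniform WZ-pair: if (f,g) ∈ K(x,y)² is a cyclic pair, i.e., f = ((σ_y^t−1)/(σ_y−1))•h and g = ((σ_x^s−1)/(σ_x−1))•h for some h ∈ K(x,y) with σ_x^s(h) = σ_y^t(h) and s,t ∈ ℤ not both zero, then there exists a nonzero integer vector 𝐯 ∈ ℤ² such that f and g are both integer-linear of type 𝐯 (in particular f = r₁(𝐯·(x,y)) and g = r₂(𝐯·(x,y)) for some univariate rational functions r₁, r₂ ∈ K(z)). -/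
noncomputable section

open MvPolynomial Polynomial

/-- The automorphism of the polynomial ring sending `X i ↦ X i + 1`. -/
def mvShift (K : Type*) [Field K] (n : ℕ) (i : Fin n) :
    MvPolynomial (Fin n) K ≃ₐ[K] MvPolynomial (Fin n) K :=
  AlgEquiv.ofAlgHom
    (MvPolynomial.aeval fun j => MvPolynomial.X j + if j = i then 1 else 0)
    (MvPolynomial.aeval fun j => MvPolynomial.X j - if j = i then 1 else 0)
    (by apply MvPolynomial.algHom_ext; intro j; by_cases h : j = i <;> simp [h])
    (by apply MvPolynomial.algHom_ext; intro j; by_cases h : j = i <;> simp [h])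

/-- The field of rational functions K(x₁,…,xₙ), modeled as the fraction field
of the multivariate polynomial ring. -/
abbrev RFF (K : Type*) [Field K] (n : ℕ) := FractionRing (MvPolynomial (Fin n) K)

/-- The shift operator σᵢ : f(x₁,…,xₙ) ↦ f(x₁,…,xᵢ+1,…,xₙ),
as a ring automorphism of K(x₁,…,xₙ). -/
def shiftOp (K : Type*) [Field K] (n : ℕ) (i : Fin n) : RingAut (RFF K n) :=
  IsFractionRing.ringEquivOfRingEquiv (mvShift K n i).toRingEquiv

/-- The forward difference operator Δᵢ = σᵢ − 1. -/
def Δ (K : Type*) [Field K] (n : ℕ) (i : Fin n) (f : RFF K n) : RFF K n :=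
  shiftOp K n i f - f

/-- The element xᵢ of K(x₁,…,xₙ). -/
def xE (K : Type*) [Field K] (n : ℕ) (i : Fin n) : RFF K n :=
  algebraMap (MvPolynomial (Fin n) K) (RFF K n) (MvPolynomial.X i)

/-- The embedding of constants K → K(x₁,…,xₙ). -/
def cE (K : Type*) [Field K] (n : ℕ) : K →+* RFF K n :=
  (algebraMap (MvPolynomial (Fin n) K) (RFF K n)).comp (MvPolynomial.C)

/-- The element 𝐯·𝐱 = v₁x₁ + ⋯ + vₙxₙ of K(x₁,…,xₙ). -/
def linC (K : Type*) [Field K] (n : ℕ) (v : Fin n → ℤ) : RFF K n :=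
  ∑ i, (v i : RFF K n) * xE K n i

/-- Evaluation of a univariate polynomial p ∈ K[z] at an element z of K(x₁,…,xₙ). -/
def pEval (K : Type*) [Field K] (n : ℕ) (z : RFF K n) (p : Polynomial K) : RFF K n :=
  Polynomial.eval₂ (cE K n) z p

/-- `f` is integer-linear of type `v`, i.e. f = r(𝐯·𝐱) for a single univariate
rational function r ∈ K(z) (represented by a pair of polynomials with nonvanishing
denominator). -/
def IsIntLin (K : Type*) [Field K] (n : ℕ) (v : Fin n → ℤ) (f : RFF K n) : Prop :=
  ∃ p q : Polynomial K, pEval K n (linC K n v) q ≠ 0 ∧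
    f = pEval K n (linC K n v) p / pEval K n (linC K n v) q

/-- The truncated sum Σ'_{ℓ=0}^{t} α_ℓ: it is α₀+⋯+α_{t−1} if t ≥ 0 and
−(α_t+⋯+α_{−1}) if t < 0. -/
def truncSum {F : Type*} [Field F] (t : ℤ) (α : ℤ → F) : F :=
  if 0 ≤ t then ∑ ℓ ∈ Finset.range t.toNat, α ℓ
  else -∑ ℓ ∈ Finset.range (-t).toNat, α (t + ℓ)

/-- The truncated product ∏'_{ℓ=0}^{t} α_ℓ: it is α₀⋯α_{t−1} if t ≥ 0 and
1/(α_t⋯α_{−1}) if t < 0. -/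
def truncProd {F : Type*} [Field F] (t : ℤ) (α : ℤ → F) : F :=
  if 0 ≤ t then ∏ ℓ ∈ Finset.range t.toNat, α ℓ
  else (∏ ℓ ∈ Finset.range (-t).toNat, α (t + ℓ))⁻¹

/-- The cyclic operator (θ^m − 1)/(θ − 1): it acts as 1 + θ + ⋯ + θ^{m−1} if m > 0,
as the zero operator if m = 0, and as −(θ^m + ⋯ + θ^{−1}) if m < 0. -/
def cyclicOp {F : Type*} [Field F] (θ : RingAut F) (m : ℤ) (h : F) : F :=
  if 0 ≤ m then ∑ i ∈ Finset.range m.toNat, (θ ^ (i : ℤ)) h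
  else -∑ i ∈ Finset.range (-m).toNat, (θ ^ (m + i)) h

section Aux

private lemma natDeg_zero_of_comp_inv {F : Type*} [Field F] [CharZero F] {e : F} (he : e ≠ 0) :
    ∀ (n : ℕ) (P : F[X]), P.natDegree = n → P.comp (Polynomial.X + Polynomial.C e) = P → P.natDegree = 0 := by
  intro n
  induction n using Nat.strong_induction_on with
  | _ n ih =>
    intro P hdeg hinv
    rcases Nat.eq_zero_or_pos n with h0 | hpos
    · omega
    · exfalso
      have hd : (derivative P).comp (Polynomial.X + Polynomial.C e) = derivative P := by
        have h2 := congrArg derivative hinv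
        rwa [derivative_comp, derivative_add, derivative_X, derivative_C, add_zero, one_mul] at h2
      have hne : P.natDegree ≠ 0 := by omega
      have hlt : (derivative P).natDegree < n := hdeg ▸ Polynomial.natDegree_derivative_lt hne
      have hd0 : (derivative P).natDegree = 0 := ih _ hlt _ rfl hd
      set c := (derivative P).coeff 0 with hc
      have hdc : derivative P = Polynomial.C c := (Polynomial.eq_C_of_natDegree_eq_zero hd0)
      have hQ : derivative (P - Polynomial.C c * Polynomial.X) = 0 := by
        rw [derivative_sub, hdc, derivative_mul, derivative_C, derivative_X]; ring
      have hPf : P = Polynomial.C c * Polynomial.X + Polynomial.C ((P - Polynomial.C c * Polynomial.X).coeff 0) := by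
        have h4 := Polynomial.eq_C_of_derivative_eq_zero hQ
        linear_combination h4
      have hce : Polynomial.C c * Polynomial.C e = 0 := by
        have h3 : (Polynomial.C c * Polynomial.X + Polynomial.C ((P - Polynomial.C c * Polynomial.X).coeff 0)).comp (Polynomial.X + Polynomial.C e) = Polynomial.C c * Polynomial.X + Polynomial.C ((P - Polynomial.C c * Polynomial.X).coeff 0) := by
          rw [← hPf]; exact hinv
        simp only [Polynomial.add_comp, Polynomial.mul_comp, Polynomial.C_comp,
          Polynomial.X_comp] at h3
        linear_combination h3
      have hc0 : c = 0 := by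
        rcases mul_eq_zero.mp hce with h | h
        · exact Polynomial.C_eq_zero.mp h
        · exact absurd (Polynomial.C_eq_zero.mp h) he
      have : P.natDegree = 0 := by
        rw [hPf, hc0]
        simp
      omega

private lemma ratfunc_fixed {F : Type*} [Field F] [CharZero F]
    (θ : RatFunc F ≃+* RatFunc F) {e : F} (he : e ≠ 0)
    (hC : ∀ a : F, θ (RatFunc.C a) = RatFunc.C a)
    (hX : θ RatFunc.X = RatFunc.X + RatFunc.C e)
    {f : RatFunc F} (hf : θ f = f) : ∃ a : F, f = RatFunc.C a := by
  have key : ∀ p : F[X], θ (algebraMap F[X] (RatFunc F) p)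
      = algebraMap F[X] (RatFunc F) (p.comp (Polynomial.X + Polynomial.C e)) := by
    have hh : (θ : RatFunc F →+* RatFunc F).comp (algebraMap F[X] (RatFunc F))
        = (algebraMap F[X] (RatFunc F)).comp (Polynomial.eval₂RingHom Polynomial.C (Polynomial.X + Polynomial.C e)) := by
      apply Polynomial.ringHom_ext
      · intro a
        simp [RatFunc.algebraMap_C, hC]
      · simp [RatFunc.algebraMap_X, RatFunc.algebraMap_C, hX]
    intro p
    have h5 := RingHom.congr_fun hh p
    simpa [Polynomial.comp] using h5
  set p := f.num with hp
  set q := f.denom with hq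
  have hq0 : q ≠ 0 := f.denom_ne_zero
  have hqm : q.Monic := f.monic_denom
  have hAqm : (q.comp (Polynomial.X + Polynomial.C e)).Monic := hqm.comp_X_add_C e
  have hmapq : algebraMap F[X] (RatFunc F) q ≠ 0 := by
    simpa using (map_ne_zero_iff _ (IsFractionRing.injective F[X] (RatFunc F))).mpr hq0
  have hmapAq : algebraMap F[X] (RatFunc F) (q.comp (Polynomial.X + Polynomial.C e)) ≠ 0 := by
    simpa using (map_ne_zero_iff _ (IsFractionRing.injective F[X] (RatFunc F))).mpr hAqm.ne_zero
  have hrepr := f.num_div_denom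
  have h2 : algebraMap F[X] (RatFunc F) (p.comp (Polynomial.X + Polynomial.C e))
      / algebraMap F[X] (RatFunc F) (q.comp (Polynomial.X + Polynomial.C e)) = f := by
    rw [← key, ← key, ← map_div₀ θ, hrepr, hf]
  have hcross : p.comp (Polynomial.X + Polynomial.C e) * q = p * q.comp (Polynomial.X + Polynomial.C e) := by
    apply IsFractionRing.injective F[X] (RatFunc F)
    rw [map_mul, map_mul]
    have h6 : algebraMap F[X] (RatFunc F) (p.comp (Polynomial.X + Polynomial.C e))
        / algebraMap F[X] (RatFunc F) (q.comp (Polynomial.X + Polynomial.C e))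
        = algebraMap F[X] (RatFunc F) p / algebraMap F[X] (RatFunc F) q := by
      rw [h2, hrepr]
    exact (div_eq_div_iff hmapAq hmapq).mp h6
  have hco : IsCoprime p q := f.isCoprime_num_denom
  have hco' : IsCoprime (p.comp (Polynomial.X + Polynomial.C e)) (q.comp (Polynomial.X + Polynomial.C e)) := by
    have h7 := hco.map (Polynomial.eval₂RingHom Polynomial.C (Polynomial.X + Polynomial.C e) : F[X] →+* F[X])
    simpa [Polynomial.comp] using h7
  have hq1 : q ∣ q.comp (Polynomial.X + Polynomial.C e) := by
    refine hco.symm.dvd_of_dvd_mul_left ?_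
    exact ⟨p.comp (Polynomial.X + Polynomial.C e), by linear_combination -hcross⟩
  have hq2 : q.comp (Polynomial.X + Polynomial.C e) ∣ q := by
    refine hco'.symm.dvd_of_dvd_mul_left ?_
    exact ⟨p, by linear_combination hcross⟩
  have hqq : q.comp (Polynomial.X + Polynomial.C e) = q :=
    Polynomial.eq_of_monic_of_associated hAqm hqm (associated_of_dvd_dvd hq2 hq1)
  have hpp : p.comp (Polynomial.X + Polynomial.C e) = p := by
    have h8 := hcross
    rw [hqq] at h8
    exact mul_right_cancel₀ hq0 h8
  have hpd : p.natDegree = 0 := natDeg_zero_of_comp_inv he _ p rfl hpp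
  have hqd : q.natDegree = 0 := natDeg_zero_of_comp_inv he _ q rfl hqq
  have hpC : p = Polynomial.C (p.coeff 0) := Polynomial.eq_C_of_natDegree_eq_zero hpd
  have hqC : q = Polynomial.C (q.coeff 0) := Polynomial.eq_C_of_natDegree_eq_zero hqd
  refine ⟨p.coeff 0 / q.coeff 0, ?_⟩
  have hrepr2 : algebraMap F[X] (RatFunc F) p / algebraMap F[X] (RatFunc F) q = f := hrepr
  rw [← hrepr2]
  conv_lhs => rw [hpC, hqC]
  rw [RatFunc.algebraMap_C, RatFunc.algebraMap_C, ← map_div₀ (RatFunc.C : F →+* RatFunc F)]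

end Aux
section Tower

attribute [local instance] MvPolynomial.algebraMvPolynomial
set_option synthInstance.maxHeartbeats 1000000
set_option maxHeartbeats 1000000

variable (K : Type*) [Field K]

local notation "A1" => MvPolynomial (Fin 1) K
local notation "FF" => FractionRing (MvPolynomial (Fin 1) K)
local notation "R2" => MvPolynomial (Fin 1) (MvPolynomial (Fin 1) K)
local notation "S2" => MvPolynomial (Fin 1) (FractionRing (MvPolynomial (Fin 1) K))
local notation "T2" => FractionRing (MvPolynomial (Fin 1) (MvPolynomial (Fin 1) K))

private lemma units_lemma :
    ∀ y : ((nonZeroDivisors (A1)).map (MvPolynomial.C : A1 →+* R2)),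
      IsUnit (algebraMap (R2) (T2) y) := by
  rintro ⟨y, m, hm, rfl⟩
  have hm0 : (m : A1) ≠ 0 := nonZeroDivisors.ne_zero hm
  have hC0 : (MvPolynomial.C m : R2) ≠ 0 := by
    simpa using hm0
  have h2 : algebraMap (R2) (T2) (MvPolynomial.C m) ≠ 0 :=
    (map_ne_zero_iff _ (IsFractionRing.injective (R2) (T2))).mpr hC0
  exact isUnit_iff_ne_zero.mpr h2

noncomputable def algST : Algebra (S2) (T2) :=
  (IsLocalization.lift (M := (nonZeroDivisors (A1)).map (MvPolynomial.C : A1 →+* R2))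
    (S := S2) (g := algebraMap (R2) (T2)) (units_lemma K)).toAlgebra

attribute [local instance] algST

private lemma towST : IsScalarTower (R2) (S2) (T2) :=
  IsScalarTower.of_algebraMap_eq' (IsLocalization.lift_comp (units_lemma K)).symm

attribute [local instance] towST

private lemma fracST : IsFractionRing (S2) (T2) :=
  IsFractionRing.isFractionRing_of_isDomain_of_isLocalization
    ((nonZeroDivisors (A1)).map (MvPolynomial.C : A1 →+* R2)) (S2) (T2)

attribute [local instance] fracST

def eqv21 : Fin 2 ≃ (Fin 1 ⊕ Fin 1) where
  toFun := ![Sum.inr 0, Sum.inl 0]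
  invFun := Sum.elim (fun _ => 1) (fun _ => 0)
  left_inv := by decide
  right_inv := by rintro (x | x) <;> fin_cases x <;> rfl

noncomputable def E2 : MvPolynomial (Fin 2) K ≃+* R2 :=
  ((MvPolynomial.renameEquiv K eqv21).trans
    (MvPolynomial.sumAlgEquiv K (Fin 1) (Fin 1))).toRingEquiv

noncomputable def e3 : A1 ≃+* Polynomial K :=
  ((MvPolynomial.renameEquiv K (Equiv.equivPUnit.{1, 1} (Fin 1))).trans
    (MvPolynomial.pUnitAlgEquiv K)).toRingEquiv

noncomputable def e2F : S2 ≃+* Polynomial (FF) :=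
  ((MvPolynomial.renameEquiv (FF) (Equiv.equivPUnit.{1, 1} (Fin 1))).trans
    (MvPolynomial.pUnitAlgEquiv (FF))).toRingEquiv

noncomputable def Lam : RFF K 2 ≃+* RatFunc (FF) :=
  (IsFractionRing.ringEquivOfRingEquiv (E2 K) : RFF K 2 ≃+* T2).trans
    (IsFractionRing.ringEquivOfRingEquiv (e2F K) : T2 ≃+* RatFunc (FF))

private lemma Lam_alg (x : MvPolynomial (Fin 2) K) :
    Lam K (algebraMap (MvPolynomial (Fin 2) K) (RFF K 2) x)
      = algebraMap (Polynomial (FF)) (RatFunc (FF))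
          (e2F K (MvPolynomial.map (algebraMap (A1) (FF)) (E2 K x))) := by
  unfold Lam
  rw [RingEquiv.trans_apply]
  rw [IsFractionRing.ringEquivOfRingEquiv_algebraMap]
  rw [IsScalarTower.algebraMap_apply (R2) (S2) (T2)]
  rw [IsFractionRing.ringEquivOfRingEquiv_algebraMap]
  rfl

private lemma E2_Cmv (k : K) :
    E2 K (MvPolynomial.C k) = MvPolynomial.C (MvPolynomial.C k) := by
  simp [E2, MvPolynomial.sumAlgEquiv_C_inl]

private lemma E2_X0 :
    E2 K (MvPolynomial.X 0) = MvPolynomial.C (MvPolynomial.X 0) := by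
  have h1 : eqv21 0 = Sum.inr 0 := rfl
  simp [E2, MvPolynomial.rename_X, h1, MvPolynomial.sumAlgEquiv_X_inr]

private lemma E2_X1 :
    E2 K (MvPolynomial.X 1) = MvPolynomial.X 0 := by
  have h1 : eqv21 1 = Sum.inl 0 := rfl
  simp [E2, MvPolynomial.rename_X, h1, MvPolynomial.sumAlgEquiv_X_inl]

private lemma e2F_C (φ : FF) : e2F K (MvPolynomial.C φ) = Polynomial.C φ := by
  simp [e2F, MvPolynomial.pUnitAlgEquiv]

private lemma e2F_X : e2F K (MvPolynomial.X 0) = Polynomial.X := by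
  simp [e2F, MvPolynomial.pUnitAlgEquiv, MvPolynomial.rename_X]

private lemma e3_C (k : K) : e3 K (MvPolynomial.C k) = Polynomial.C k := by
  simp [e3, MvPolynomial.pUnitAlgEquiv]

private lemma e3_X : e3 K (MvPolynomial.X 0) = Polynomial.X := by
  simp [e3, MvPolynomial.pUnitAlgEquiv, MvPolynomial.rename_X]

noncomputable def iota : A1 →+* MvPolynomial (Fin 2) K :=
  (E2 K).symm.toRingHom.comp (MvPolynomial.C : A1 →+* R2)

private lemma E2_iota (a : A1) : E2 K (iota K a) = MvPolynomial.C a := by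
  simp [iota]

private lemma iota_C (k : K) : iota K (MvPolynomial.C k) = MvPolynomial.C k := by
  apply (E2 K).injective
  rw [E2_iota, E2_Cmv]

private lemma iota_X : iota K (MvPolynomial.X 0) = MvPolynomial.X 0 := by
  apply (E2 K).injective
  rw [E2_iota, E2_X0]

private lemma Lam_x1 : Lam K (xE K 2 1) = RatFunc.X := by
  rw [xE, Lam_alg, E2_X1]
  rw [show MvPolynomial.map (algebraMap (A1) (FF)) (MvPolynomial.X (0 : Fin 1))
      = MvPolynomial.X 0 from MvPolynomial.map_X _ _]
  rw [e2F_X, RatFunc.algebraMap_X]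

private lemma Lam_iota (a : A1) :
    Lam K (algebraMap (MvPolynomial (Fin 2) K) (RFF K 2) (iota K a))
      = RatFunc.C (algebraMap (A1) (FF) a) := by
  rw [Lam_alg, E2_iota, MvPolynomial.map_C, e2F_C, RatFunc.algebraMap_C]

private lemma alg_iota_eval (a : A1) :
    algebraMap (MvPolynomial (Fin 2) K) (RFF K 2) (iota K a)
      = Polynomial.eval₂ (cE K 2) (xE K 2 0) (e3 K a) := by
  have hext : (algebraMap (MvPolynomial (Fin 2) K) (RFF K 2)).comp (iota K)
      = (Polynomial.eval₂RingHom (cE K 2) (xE K 2 0)).comp ((e3 K) : A1 →+* Polynomial K) := by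
    apply MvPolynomial.ringHom_ext
    · intro k
      simp [iota_C, e3_C, cE]
    · intro i
      have hi : i = 0 := Subsingleton.elim _ _
      subst hi
      simp [iota_X, e3_X, xE]
  exact RingHom.congr_fun hext a

set_option maxRecDepth 20000 in
theorem fixed_mem [CharZero K] (Θ : RFF K 2 ≃+* RFF K 2)
    (hCc : ∀ a : K, Θ (cE K 2 a) = cE K 2 a)
    (h0 : Θ (xE K 2 0) = xE K 2 0)
    {d : ℤ} (hd : d ≠ 0)
    (h1 : Θ (xE K 2 1) = xE K 2 1 - (d : RFF K 2))
    {h : RFF K 2} (hh : Θ h = h) :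
    ∃ P Q : Polynomial K, Q ≠ 0 ∧
      h = Polynomial.eval₂ (cE K 2) (xE K 2 0) P / Polynomial.eval₂ (cE K 2) (xE K 2 0) Q := by
  haveI : CharZero (FF) :=
    charZero_of_injective_algebraMap (IsFractionRing.injective (A1) (FF))
  set θ : RatFunc (FF) ≃+* RatFunc (FF) := (((Lam K).symm.trans Θ).trans (Lam K)) with hθdef
  have hθapp : ∀ x, θ x = Lam K (Θ ((Lam K).symm x)) := fun x => rfl
  have hΘalg : ∀ a : A1,
      Θ (algebraMap (MvPolynomial (Fin 2) K) (RFF K 2) (iota K a))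
        = algebraMap (MvPolynomial (Fin 2) K) (RFF K 2) (iota K a) := by
    intro a
    have hext : (Θ : RFF K 2 →+* RFF K 2).comp
        ((algebraMap (MvPolynomial (Fin 2) K) (RFF K 2)).comp (iota K))
        = (algebraMap (MvPolynomial (Fin 2) K) (RFF K 2)).comp (iota K) := by
      apply MvPolynomial.ringHom_ext
      · intro k
        have : algebraMap (MvPolynomial (Fin 2) K) (RFF K 2) (MvPolynomial.C k) = cE K 2 k := rfl
        simp [iota_C, this, hCc]
      · intro i
        have hi : i = 0 := Subsingleton.elim _ _
        subst hi
        have : algebraMap (MvPolynomial (Fin 2) K) (RFF K 2) (MvPolynomial.X 0) = xE K 2 0 := rfl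
        simp [iota_X, this, h0]
    exact RingHom.congr_fun hext a
  have hsymC : ∀ r : FF, ∃ a b : A1, b ≠ 0 ∧
      (Lam K).symm (RatFunc.C r)
        = algebraMap (MvPolynomial (Fin 2) K) (RFF K 2) (iota K a)
          / algebraMap (MvPolynomial (Fin 2) K) (RFF K 2) (iota K b) ∧
      RatFunc.C r = RatFunc.C (algebraMap (A1) (FF) a) / RatFunc.C (algebraMap (A1) (FF) b) := by
    intro r
    obtain ⟨a, b, hb, hab⟩ := IsFractionRing.div_surjective (A := A1) (K := FF) r
    refine ⟨a, b, nonZeroDivisors.ne_zero hb, ?_, ?_⟩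
    · rw [← hab, map_div₀ (RatFunc.C : FF →+* RatFunc FF), ← Lam_iota, ← Lam_iota,
        ← map_div₀ (Lam K)]
      exact RingEquiv.symm_apply_apply _ _
    · rw [← hab, map_div₀ (RatFunc.C : FF →+* RatFunc FF)]
  have hθC : ∀ r : FF, θ (RatFunc.C r) = RatFunc.C r := by
    intro r
    obtain ⟨a, b, hb0, hsym, hCr⟩ := hsymC r
    rw [hθapp, hsym, map_div₀ Θ, hΘalg, hΘalg, map_div₀ (Lam K), Lam_iota, Lam_iota, ← hCr]
  have hθX : θ RatFunc.X = RatFunc.X + RatFunc.C (-(d : FF)) := by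
    have hsymX : (Lam K).symm RatFunc.X = xE K 2 1 := by
      rw [← Lam_x1, RingEquiv.symm_apply_apply]
    rw [hθapp, hsymX, h1, map_sub, Lam_x1, map_intCast, map_neg, map_intCast]
    ring
  have hθf : θ (Lam K h) = Lam K h := by
    rw [hθapp, RingEquiv.symm_apply_apply, hh]
  have hed : (-(d : FF)) ≠ 0 := by
    simp only [ne_eq, neg_eq_zero, Int.cast_eq_zero]
    exact hd
  obtain ⟨r, hr⟩ := ratfunc_fixed θ hed hθC hθX hθf
  obtain ⟨a, b, hb0, hsym, hCr⟩ := hsymC r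
  refine ⟨e3 K a, e3 K b, ?_, ?_⟩
  · intro h9
    exact hb0 ((e3 K).injective (by rw [h9, map_zero]))
  · have hval : h = (Lam K).symm (RatFunc.C r) := by
      rw [← hr, RingEquiv.symm_apply_apply]
    rw [hval, hsym, alg_iota_eval, alg_iota_eval]

end Tower
section ShiftTools
set_option synthInstance.maxHeartbeats 1000000
set_option maxHeartbeats 1000000

variable {K : Type*} [Field K] {n : ℕ}

private lemma ringAut_mul_apply {L : Type*} [Field L] (a b : L ≃+* L) (x : L) :
    (a * b) x = a (b x) := rfl

private lemma zpow_affine {L : Type*} [Field L] (φ : L ≃+* L) (u : L) (a : ℤ)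
    (hφ : φ u = u + (a : L)) : ∀ m : ℤ, (φ ^ m) u = u + ((m * a : ℤ) : L) := by
  have hnat : ∀ k : ℕ, (φ ^ k) u = u + ((k * a : ℤ) : L) := by
    intro k
    induction k with
    | zero =>
      rw [pow_zero]
      show u = u + (((0 : ℕ) * a : ℤ) : L)
      push_cast
      ring
    | succ k ih =>
      rw [pow_succ, ringAut_mul_apply, hφ, map_add, map_intCast, ih]
      push_cast
      ring
  intro m
  cases m with
  | ofNat k =>
    rw [Int.ofNat_eq_coe, zpow_natCast]
    exact hnat k
  | negSucc k =>
    rw [zpow_negSucc]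
    show ((φ ^ (k + 1)).symm) u = u + ((Int.negSucc k * a : ℤ) : L)
    apply (φ ^ (k + 1)).injective
    rw [RingEquiv.apply_symm_apply, map_add, map_intCast, hnat]
    push_cast
    ring

private lemma shiftOp_alg (i : Fin n) (p : MvPolynomial (Fin n) K) :
    shiftOp K n i (algebraMap (MvPolynomial (Fin n) K) (RFF K n) p)
      = algebraMap (MvPolynomial (Fin n) K) (RFF K n) (mvShift K n i p) :=
  IsFractionRing.ringEquivOfRingEquiv_algebraMap _ _

private lemma shiftOp_xE (i j : Fin n) :
    shiftOp K n i (xE K n j) = xE K n j + (if j = i then 1 else 0) := by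
  rw [xE, shiftOp_alg]
  have hm : mvShift K n i (MvPolynomial.X j)
      = MvPolynomial.X j + (if j = i then 1 else 0) := by
    simp [mvShift]
  rw [hm]
  split_ifs with hji <;> simp [xE, map_add, map_one]

private lemma shiftOp_cE (i : Fin n) (a : K) : shiftOp K n i (cE K n a) = cE K n a := by
  have h1 : (cE K n) a = algebraMap (MvPolynomial (Fin n) K) (RFF K n) (MvPolynomial.C a) := rfl
  rw [h1, shiftOp_alg]
  congr 1
  simp [mvShift]

private lemma shiftOp_zpow_xE (i j : Fin n) (m : ℤ) :
    (shiftOp K n i ^ m) (xE K n j)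
      = xE K n j + ((m * (if j = i then 1 else 0) : ℤ) : RFF K n) := by
  refine zpow_affine _ _ _ ?_ m
  rw [shiftOp_xE]
  split_ifs <;> simp

private lemma shiftOp_zpow_cE (i : Fin n) (a : K) (m : ℤ) :
    (shiftOp K n i ^ m) (cE K n a) = cE K n a := by
  have h1 := zpow_affine (shiftOp K n i) (cE K n a) 0 (by rw [shiftOp_cE]; simp) m
  simpa using h1

end ShiftTools

section ILTools
set_option synthInstance.maxHeartbeats 1000000
set_option maxHeartbeats 1000000

variable {K : Type*} [Field K]

private lemma pEval_ne_zero (a b : K) (hab : ¬(a = 0 ∧ b = 0)) {Q : Polynomial K} (hQ : Q ≠ 0) :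
    Polynomial.eval₂ (cE K 2) (cE K 2 a * xE K 2 0 + cE K 2 b * xE K 2 1) Q ≠ 0 := by
  have hw : cE K 2 a * xE K 2 0 + cE K 2 b * xE K 2 1
      = algebraMap (MvPolynomial (Fin 2) K) (RFF K 2)
          (MvPolynomial.C a * MvPolynomial.X 0 + MvPolynomial.C b * MvPolynomial.X 1) := by
    simp only [map_add, map_mul]
    rfl
  rw [hw]
  have heq := Polynomial.hom_eval₂ Q (MvPolynomial.C : K →+* MvPolynomial (Fin 2) K)
    (algebraMap (MvPolynomial (Fin 2) K) (RFF K 2))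
    (MvPolynomial.C a * MvPolynomial.X 0 + MvPolynomial.C b * MvPolynomial.X 1)
  have hcomp : (algebraMap (MvPolynomial (Fin 2) K) (RFF K 2)).comp
      (MvPolynomial.C : K →+* MvPolynomial (Fin 2) K) = cE K 2 := rfl
  rw [hcomp] at heq
  rw [← heq]
  rw [map_ne_zero_iff (algebraMap (MvPolynomial (Fin 2) K) (RFF K 2))
    (IsFractionRing.injective (MvPolynomial (Fin 2) K) (RFF K 2))]
  -- now a polynomial-level statement
  have hor : a ≠ 0 ∨ b ≠ 0 := by tauto
  rcases hor with ha | hb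
  · set r : MvPolynomial (Fin 2) K →+* Polynomial K :=
      (MvPolynomial.aeval (R := K) ![Polynomial.C a⁻¹ * Polynomial.X, 0]).toRingHom with hr
    intro h0
    apply hQ
    have h2 : r (Polynomial.eval₂ MvPolynomial.C
        (MvPolynomial.C a * MvPolynomial.X 0 + MvPolynomial.C b * MvPolynomial.X 1) Q) = Q := by
      rw [Polynomial.hom_eval₂]
      have h3 : r.comp (MvPolynomial.C : K →+* MvPolynomial (Fin 2) K)
          = (Polynomial.C : K →+* Polynomial K) := by
        ext k
        simp [hr]
      have h4 : r (MvPolynomial.C a * MvPolynomial.X 0 + MvPolynomial.C b * MvPolynomial.X 1)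
          = Polynomial.X := by
        simp [hr]
        rw [← mul_assoc, ← Polynomial.C_mul, mul_inv_cancel₀ ha]
        simp
      rw [h3, h4]
      exact Polynomial.eval₂_C_X
    rw [← h2, h0, map_zero]
  · set r : MvPolynomial (Fin 2) K →+* Polynomial K :=
      (MvPolynomial.aeval (R := K) ![0, Polynomial.C b⁻¹ * Polynomial.X]).toRingHom with hr
    intro h0
    apply hQ
    have h2 : r (Polynomial.eval₂ MvPolynomial.C
        (MvPolynomial.C a * MvPolynomial.X 0 + MvPolynomial.C b * MvPolynomial.X 1) Q) = Q := by
      rw [Polynomial.hom_eval₂]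
      have h3 : r.comp (MvPolynomial.C : K →+* MvPolynomial (Fin 2) K)
          = (Polynomial.C : K →+* Polynomial K) := by
        ext k
        simp [hr]
      have h4 : r (MvPolynomial.C a * MvPolynomial.X 0 + MvPolynomial.C b * MvPolynomial.X 1)
          = Polynomial.X := by
        simp [hr]
        rw [← mul_assoc, ← Polynomial.C_mul, mul_inv_cancel₀ hb]
        simp
      rw [h3, h4]
      exact Polynomial.eval₂_C_X
    rw [← h2, h0, map_zero]

variable (v : Fin 2 → ℤ)

private lemma isIntLin_zero : IsIntLin K 2 v 0 :=
  ⟨0, 1, by simp [pEval], by simp [pEval]⟩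

private lemma isIntLin_neg {f : RFF K 2} (hf : IsIntLin K 2 v f) : IsIntLin K 2 v (-f) := by
  obtain ⟨p, q, hq, hfe⟩ := hf
  exact ⟨-p, q, hq, by rw [hfe]; simp [pEval, neg_div]⟩

private lemma isIntLin_add {f g : RFF K 2} (hf : IsIntLin K 2 v f) (hg : IsIntLin K 2 v g) :
    IsIntLin K 2 v (f + g) := by
  obtain ⟨p1, q1, hq1, hf1⟩ := hf
  obtain ⟨p2, q2, hq2, hf2⟩ := hg
  refine ⟨p1 * q2 + q1 * p2, q1 * q2, ?_, ?_⟩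
  · simp only [pEval, Polynomial.eval₂_mul]
    exact mul_ne_zero hq1 hq2
  · rw [hf1, hf2, div_add_div _ _ hq1 hq2]
    simp only [pEval, Polynomial.eval₂_mul, Polynomial.eval₂_add]

private lemma isIntLin_sum {α : Type*} (s : Finset α) (F : α → RFF K 2)
    (hF : ∀ i ∈ s, IsIntLin K 2 v (F i)) : IsIntLin K 2 v (∑ i ∈ s, F i) := by
  classical
  induction s using Finset.cons_induction with
  | empty => simpa using isIntLin_zero v
  | cons a s ha ih =>
    rw [Finset.sum_cons]
    exact isIntLin_add v (hF a (by simp)) (ih fun i hi => hF i (by simp [hi]))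

private lemma isIntLin_shift (i : Fin 2) (m : ℤ) {f : RFF K 2} (hf : IsIntLin K 2 v f) :
    IsIntLin K 2 v ((shiftOp K 2 i ^ m) f) := by
  obtain ⟨p, q, hq, hfe⟩ := hf
  set σ := shiftOp K 2 i ^ m with hσ
  set c : K := ((m * v i : ℤ) : K) with hc
  have hσcE : ∀ a : K, σ (cE K 2 a) = cE K 2 a := fun a => shiftOp_zpow_cE i a m
  have hσlin : σ (linC K 2 v) = linC K 2 v + cE K 2 c := by
    simp only [linC, Fin.sum_univ_two]
    rw [map_add, map_mul, map_mul, map_intCast, map_intCast,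
      shiftOp_zpow_xE, shiftOp_zpow_xE, map_intCast (cE K 2)]
    fin_cases i <;> · simp; push_cast; ring
  have hkey : ∀ P : Polynomial K, σ (pEval K 2 (linC K 2 v) P)
      = pEval K 2 (linC K 2 v) (P.comp (Polynomial.X + Polynomial.C c)) := by
    intro P
    have h1 := Polynomial.hom_eval₂ P (cE K 2) (σ : RFF K 2 →+* RFF K 2) (linC K 2 v)
    have h2 : (σ : RFF K 2 →+* RFF K 2).comp (cE K 2) = cE K 2 := by
      ext a
      exact hσcE a
    rw [h2] at h1
    have h3 : (σ : RFF K 2 →+* RFF K 2) (linC K 2 v) = linC K 2 v + cE K 2 c := hσlin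
    rw [h3] at h1
    rw [pEval, pEval]
    have h4 : (σ : RFF K 2 →+* RFF K 2) (Polynomial.eval₂ (cE K 2) (linC K 2 v) P)
        = σ (Polynomial.eval₂ (cE K 2) (linC K 2 v) P) := rfl
    rw [← h4, h1, Polynomial.eval₂_comp]
    congr 1
    simp [Polynomial.eval₂_add]
  refine ⟨p.comp (Polynomial.X + Polynomial.C c), q.comp (Polynomial.X + Polynomial.C c), ?_, ?_⟩
  · rw [← hkey]
    intro h0
    exact hq (σ.injective (by rw [h0, map_zero]))
  · rw [hfe, map_div₀ σ, hkey, hkey]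

end ILTools

section Chg
set_option synthInstance.maxHeartbeats 1000000
set_option maxHeartbeats 1000000

variable (K : Type*) [Field K]

noncomputable def chgHom (p1 p2 p3 p4 : ℤ) :
    MvPolynomial (Fin 2) K →ₐ[K] MvPolynomial (Fin 2) K :=
  MvPolynomial.aeval
    ![(p1 : MvPolynomial (Fin 2) K) * MvPolynomial.X 0
        + (p2 : MvPolynomial (Fin 2) K) * MvPolynomial.X 1,
      (p3 : MvPolynomial (Fin 2) K) * MvPolynomial.X 0
        + (p4 : MvPolynomial (Fin 2) K) * MvPolynomial.X 1]

private lemma bezout_cast {t' s' u w : ℤ} (hB : t' * w - s' * u = 1) :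
    ((t' : MvPolynomial (Fin 2) K) * (w : MvPolynomial (Fin 2) K)
      - (s' : MvPolynomial (Fin 2) K) * (u : MvPolynomial (Fin 2) K)) = 1 := by
  have h1 : ((t' * w - s' * u : ℤ) : MvPolynomial (Fin 2) K)
      = ((1 : ℤ) : MvPolynomial (Fin 2) K) := by rw [hB]
  push_cast at h1
  linear_combination h1

noncomputable def chgEquiv {t' s' u w : ℤ} (hB : t' * w - s' * u = 1) :
    MvPolynomial (Fin 2) K ≃ₐ[K] MvPolynomial (Fin 2) K :=
  AlgEquiv.ofAlgHom (chgHom K t' s' u w) (chgHom K w (-s') (-u) t')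
    (by
      have hBK := bezout_cast K hB
      apply MvPolynomial.algHom_ext
      intro i
      fin_cases i
      · simp [chgHom]
        push_cast
        linear_combination (MvPolynomial.X (0 : Fin 2) : MvPolynomial (Fin 2) K) * hBK
      · simp [chgHom]
        push_cast
        linear_combination (MvPolynomial.X (1 : Fin 2) : MvPolynomial (Fin 2) K) * hBK)
    (by
      have hBK := bezout_cast K hB
      apply MvPolynomial.algHom_ext
      intro i
      fin_cases i
      · simp [chgHom]
        push_cast
        linear_combination (MvPolynomial.X (0 : Fin 2) : MvPolynomial (Fin 2) K) * hBK
      · simp [chgHom]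
        push_cast
        linear_combination (MvPolynomial.X (1 : Fin 2) : MvPolynomial (Fin 2) K) * hBK)

private lemma chg_X0 {t' s' u w : ℤ} (hB : t' * w - s' * u = 1) :
    chgEquiv K hB (MvPolynomial.X 0)
      = (t' : MvPolynomial (Fin 2) K) * MvPolynomial.X 0
        + (s' : MvPolynomial (Fin 2) K) * MvPolynomial.X 1 := by
  show chgHom K t' s' u w (MvPolynomial.X 0) = _
  simp [chgHom]

private lemma chg_X1 {t' s' u w : ℤ} (hB : t' * w - s' * u = 1) :
    chgEquiv K hB (MvPolynomial.X 1)
      = (u : MvPolynomial (Fin 2) K) * MvPolynomial.X 0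
        + (w : MvPolynomial (Fin 2) K) * MvPolynomial.X 1 := by
  show chgHom K t' s' u w (MvPolynomial.X 1) = _
  simp [chgHom]

private lemma chg_C {t' s' u w : ℤ} (hB : t' * w - s' * u = 1) (a : K) :
    chgEquiv K hB (MvPolynomial.C a) = MvPolynomial.C a := by
  show chgHom K t' s' u w (MvPolynomial.C a) = _
  simp [chgHom]

end Chg
set_option synthInstance.maxHeartbeats 1000000 in
set_option maxHeartbeats 2000000 in
/-- **Every cyclic WZ-pair is a uniform WZ-pair.** If (f,g) ∈ K(x,y)² is a cyclic
pair, i.e. f = ((σ_y^t−1)/(σ_y−1))•h and g = ((σ_x^s−1)/(σ_x−1))•h for some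
h ∈ K(x,y) with σ_x^s(h) = σ_y^t(h) and s,t ∈ ℤ not both zero, then there is a
nonzero 𝐯 ∈ ℤ² such that f and g are both integer-linear of type 𝐯, i.e.
f = r₁(𝐯·(x,y)) and g = r₂(𝐯·(x,y)) for univariate rational functions r₁,r₂ ∈ K(z).
Here x = x₀ and y = x₁ in K(x₀,x₁) = RFF K 2. -/
theorem cyclic_pair_is_uniform
    (K : Type*) [Field K] [CharZero K] [IsAlgClosed K]
    (h : RFF K 2) (s t : ℤ) (hst : ¬(s = 0 ∧ t = 0))
    (hinv : (shiftOp K 2 0 ^ s) h = (shiftOp K 2 1 ^ t) h)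
    (f g : RFF K 2)
    (hf : f = cyclicOp (shiftOp K 2 1) t h)
    (hg : g = cyclicOp (shiftOp K 2 0) s h) :
    ∃ v : Fin 2 → ℤ, v ≠ 0 ∧ IsIntLin K 2 v f ∧ IsIntLin K 2 v g := by

  classical
  subst hf hg
  -- gcd and Bezout setup
  set d : ℤ := (Int.gcd t s : ℤ) with hddef
  have hd0 : d ≠ 0 := by
    simp only [hddef, ne_eq, Int.natCast_eq_zero]
    intro hgz
    exact hst ⟨(Int.gcd_eq_zero_iff.mp hgz).2, (Int.gcd_eq_zero_iff.mp hgz).1⟩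
  have hdt : d ∣ t := Int.gcd_dvd_left t s
  have hds : d ∣ s := Int.gcd_dvd_right t s
  set t' : ℤ := t / d with ht'def
  set s' : ℤ := s / d with hs'def
  have ht : t = d * t' := (Int.mul_ediv_cancel' hdt).symm
  have hs : s = d * s' := (Int.mul_ediv_cancel' hds).symm
  have hgcdpos : 0 < Int.gcd t s :=
    Nat.pos_of_ne_zero (fun h9 => hd0 (by rw [hddef, h9]; rfl))
  have hcop : Int.gcd t' s' = 1 := Int.gcd_div_gcd_div_gcd hgcdpos
  obtain ⟨u, w, hB⟩ : ∃ u w : ℤ, t' * w - s' * u = 1 := by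
    refine ⟨-(Int.gcdB t' s'), Int.gcdA t' s', ?_⟩
    have hab := Int.gcd_eq_gcd_ab t' s'
    rw [hcop] at hab
    push_cast at hab
    linarith
  -- the type vector
  set v : Fin 2 → ℤ := ![t, s] with hvdef
  have hvne : v ≠ 0 := by
    intro h0
    exact hst ⟨by simpa [hvdef] using congrFun h0 1, by simpa [hvdef] using congrFun h0 0⟩
  -- the automorphism τ
  set τ : RingAut (RFF K 2) := (shiftOp K 2 1) ^ (-t) * (shiftOp K 2 0) ^ s with hτdef
  have hτh : τ h = h := by
    have h1 : τ h = ((shiftOp K 2 1) ^ (-t)) (((shiftOp K 2 0) ^ s) h) := rfl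
    rw [h1, hinv]
    have h2 : ((shiftOp K 2 1) ^ (-t)) (((shiftOp K 2 1) ^ t) h)
        = (((shiftOp K 2 1) ^ (-t)) * ((shiftOp K 2 1) ^ t)) h := rfl
    rw [h2, ← zpow_add, neg_add_cancel, zpow_zero]
    rfl
  have hτ0 : τ (xE K 2 0) = xE K 2 0 + ((s : ℤ) : RFF K 2) := by
    have h1 : τ (xE K 2 0) = ((shiftOp K 2 1) ^ (-t)) (((shiftOp K 2 0) ^ s) (xE K 2 0)) := rfl
    rw [h1, shiftOp_zpow_xE, map_add, map_intCast, shiftOp_zpow_xE]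
    norm_num
  have hτ1 : τ (xE K 2 1) = xE K 2 1 - ((t : ℤ) : RFF K 2) := by
    have h1 : τ (xE K 2 1) = ((shiftOp K 2 1) ^ (-t)) (((shiftOp K 2 0) ^ s) (xE K 2 1)) := rfl
    rw [h1, shiftOp_zpow_xE, map_add, map_intCast, shiftOp_zpow_xE]
    norm_num
    push_cast
    ring
  have hτc : ∀ a : K, τ (cE K 2 a) = cE K 2 a := by
    intro a
    have h1 : τ (cE K 2 a) = ((shiftOp K 2 1) ^ (-t)) (((shiftOp K 2 0) ^ s) (cE K 2 a)) := rfl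
    rw [h1, shiftOp_zpow_cE, shiftOp_zpow_cE]
  -- the change of variables Ψ
  set Ψ : RFF K 2 ≃+* RFF K 2 :=
    (IsFractionRing.ringEquivOfRingEquiv (chgEquiv K hB).toRingEquiv : RFF K 2 ≃+* RFF K 2)
    with hΨdef
  have hΨalg : ∀ p : MvPolynomial (Fin 2) K,
      Ψ (algebraMap (MvPolynomial (Fin 2) K) (RFF K 2) p)
        = algebraMap (MvPolynomial (Fin 2) K) (RFF K 2) (chgEquiv K hB p) := fun p =>
    IsFractionRing.ringEquivOfRingEquiv_algebraMap _ _
  have hΨ0 : Ψ (xE K 2 0) = ((t' : ℤ) : RFF K 2) * xE K 2 0 + ((s' : ℤ) : RFF K 2) * xE K 2 1 := by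
    rw [xE, hΨalg, chg_X0, map_add, map_mul, map_mul, map_intCast, map_intCast]
    rfl
  have hΨ1 : Ψ (xE K 2 1) = ((u : ℤ) : RFF K 2) * xE K 2 0 + ((w : ℤ) : RFF K 2) * xE K 2 1 := by
    rw [xE, hΨalg, chg_X1, map_add, map_mul, map_mul, map_intCast, map_intCast]
    rfl
  have hΨc : ∀ a : K, Ψ (cE K 2 a) = cE K 2 a := by
    intro a
    have h1 : cE K 2 a = algebraMap (MvPolynomial (Fin 2) K) (RFF K 2) (MvPolynomial.C a) := rfl
    rw [h1, hΨalg, chg_C]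
  -- the conjugated automorphism Θ
  set Θ : RFF K 2 ≃+* RFF K 2 := Ψ.trans (τ.trans Ψ.symm) with hΘdef
  have hΘapp : ∀ x, Θ x = Ψ.symm (τ (Ψ x)) := fun x => rfl
  have hΘ0 : Θ (xE K 2 0) = xE K 2 0 := by
    rw [hΘapp, hΨ0, map_add, map_mul, map_mul, map_intCast, map_intCast, hτ0, hτ1]
    have harith : ((t' : ℤ) : RFF K 2) * (xE K 2 0 + ((s : ℤ) : RFF K 2))
        + ((s' : ℤ) : RFF K 2) * (xE K 2 1 - ((t : ℤ) : RFF K 2)) = Ψ (xE K 2 0) := by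
      rw [hΨ0]
      have hz : ((t' * s - s' * t : ℤ) : RFF K 2) = 0 := by
        have : t' * s - s' * t = 0 := by rw [ht, hs]; ring
        rw [this]
        norm_num
      push_cast at hz
      linear_combination hz
    rw [harith, RingEquiv.symm_apply_apply]
  have hΘ1 : Θ (xE K 2 1) = xE K 2 1 - (d : RFF K 2) := by
    rw [hΘapp, hΨ1, map_add, map_mul, map_mul, map_intCast, map_intCast, hτ0, hτ1]
    have harith : ((u : ℤ) : RFF K 2) * (xE K 2 0 + ((s : ℤ) : RFF K 2))
        + ((w : ℤ) : RFF K 2) * (xE K 2 1 - ((t : ℤ) : RFF K 2))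
        = Ψ (xE K 2 1 - (d : RFF K 2)) := by
      rw [map_sub, map_intCast, hΨ1]
      have hz : ((u * s - w * t + d : ℤ) : RFF K 2) = 0 := by
        have : u * s - w * t + d = 0 := by rw [ht, hs]; linear_combination (-d) * hB
        rw [this]
        norm_num
      push_cast at hz
      linear_combination hz
    rw [harith, RingEquiv.symm_apply_apply]
  have hΘc : ∀ a : K, Θ (cE K 2 a) = cE K 2 a := by
    intro a
    rw [hΘapp, hΨc, hτc]
    have h1 : Ψ (Ψ.symm (cE K 2 a)) = Ψ (cE K 2 a) := by
      rw [RingEquiv.apply_symm_apply, hΨc]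
    exact Ψ.injective (by rw [RingEquiv.apply_symm_apply, hΨc])
  have hΘh : Θ (Ψ.symm h) = Ψ.symm h := by
    rw [hΘapp, RingEquiv.apply_symm_apply, hτh]
  -- apply fixed_mem
  obtain ⟨P, Q, hQ0, hPQ⟩ := fixed_mem K Θ hΘc hΘ0 hd0 hΘ1 hΘh
  -- transfer along Ψ
  have hΨeval : ∀ R : Polynomial K,
      Ψ (Polynomial.eval₂ (cE K 2) (xE K 2 0) R)
        = Polynomial.eval₂ (cE K 2) (Ψ (xE K 2 0)) R := by
    intro R
    have h1 := Polynomial.hom_eval₂ R (cE K 2) (Ψ : RFF K 2 →+* RFF K 2) (xE K 2 0)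
    have h2 : (Ψ : RFF K 2 →+* RFF K 2).comp (cE K 2) = cE K 2 := by
      ext a
      exact hΨc a
    rw [h2] at h1
    exact h1
  have hh2 : h = Polynomial.eval₂ (cE K 2) (Ψ (xE K 2 0)) P
      / Polynomial.eval₂ (cE K 2) (Ψ (xE K 2 0)) Q := by
    have h1 : h = Ψ (Ψ.symm h) := (RingEquiv.apply_symm_apply _ _).symm
    rw [h1, hPQ, map_div₀ Ψ, hΨeval, hΨeval]
  -- relate Ψ x0 to linC
  have hlin : linC K 2 v = ((t : ℤ) : RFF K 2) * xE K 2 0 + ((s : ℤ) : RFF K 2) * xE K 2 1 := by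
    simp [linC, Fin.sum_univ_two, hvdef]
  set dK : K := ((d : ℤ) : K) with hdKdef
  have hdK0 : dK ≠ 0 := Int.cast_ne_zero.mpr hd0
  have hlinz : linC K 2 v = cE K 2 dK * Ψ (xE K 2 0) := by
    rw [hlin, hΨ0, map_intCast (cE K 2)]
    have h1 : ((t : ℤ) : RFF K 2) = ((d * t' : ℤ) : RFF K 2) := by rw [← ht]
    have h2 : ((s : ℤ) : RFF K 2) = ((d * s' : ℤ) : RFF K 2) := by rw [← hs]
    push_cast at h1 h2
    linear_combination xE K 2 0 * h1 + xE K 2 1 * h2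
  have hz_eval : ∀ R : Polynomial K,
      Polynomial.eval₂ (cE K 2) (Ψ (xE K 2 0)) R
        = pEval K 2 (linC K 2 v) (R.comp (Polynomial.C dK⁻¹ * Polynomial.X)) := by
    intro R
    rw [pEval, Polynomial.eval₂_comp]
    congr 1
    rw [Polynomial.eval₂_mul, Polynomial.eval₂_C, Polynomial.eval₂_X, hlinz, ← mul_assoc,
      ← map_mul, inv_mul_cancel₀ hdK0, map_one, one_mul]
  -- h is integer-linear
  have hILh : IsIntLin K 2 v h := by
    refine ⟨P.comp (Polynomial.C dK⁻¹ * Polynomial.X),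
      Q.comp (Polynomial.C dK⁻¹ * Polynomial.X), ?_, ?_⟩
    · rw [← hz_eval]
      have hx0 : Ψ (xE K 2 0)
          = cE K 2 ((t' : ℤ) : K) * xE K 2 0 + cE K 2 ((s' : ℤ) : K) * xE K 2 1 := by
        rw [hΨ0, map_intCast (cE K 2), map_intCast (cE K 2)]
      rw [hx0]
      refine pEval_ne_zero _ _ ?_ hQ0
      rintro ⟨ha, hb⟩
      have ht'0 : t' = 0 := by exact_mod_cast ha
      have hs'0 : s' = 0 := by exact_mod_cast hb
      rw [ht'0, hs'0] at hB
      norm_num at hB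
    · rw [hh2, hz_eval, hz_eval]
  -- conclude
  have hcyc : ∀ (i : Fin 2) (m : ℤ), IsIntLin K 2 v (cyclicOp (shiftOp K 2 i) m h) := by
    intro i m
    rw [cyclicOp]
    split_ifs with hm
    · exact isIntLin_sum v _ _ fun ℓ _ => isIntLin_shift v i _ hILh
    · exact isIntLin_neg v (isIntLin_sum v _ _ fun ℓ _ => isIntLin_shift v i _ hILh)
  exact ⟨v, hvne, hcyc 1 t, hcyc 0 s⟩
end
end
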